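/- arXiv:2011.12239 — 2 statements merged into one kernel-verified Lean document; each statement's English description precedes it below -/
import Mathlib

section
/- Under the ideal setup (ℒ = Θ̃ Π P Π' Θ̃ = V E V', V'V = I_K, E diagonal invertible, P symmetric invertible with all diagonal entries equal to 1, Π a rank-K membership matrix with pure index tuple I so that Π(I,:) = I_K, Θ̃ diagonal with positive diagonal), define V_{*,1} = N_V V, Y_• = V V_{*,1}(I,:)' (V_{*,1}(I,:) V_{*,1}(I,:)')^{-1}, J = √(diag(V_{*,1}(I,:) E V_{*,1}(I,:)')), and Z = Y_• J. Then Z = D Π for some diagonal matrix D with strictly positive diagonal entries, and consequently for every i ∈ {1,…,n}, Π(i,:) = Z(i,:)/‖Z(i,:)‖₁; i.e., the Ideal Mixed-RSC procedure exactly recovers the membership matrix Π. -/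
/-!
Let `X = Θ̃ Π`, so that `ℒ = X P Xᵀ` and `X(I,:) = Θ̃(I,I)` is an invertible diagonal matrix.
Since `Vᵀ V = 1`, the columns of `V` lie in the column space of `ℒ`, so `V = X B` with
`B = P Xᵀ V E⁻¹`; comparing the `I × I` corners of `X P Xᵀ = V E Vᵀ` gives `B E Bᵀ = P`, so `B`
is invertible. Row normalization only rescales the rows of the corner `V(I,:) = Θ̃(I,I) B`, so
`V_{*,1}(I,:) = S B` with `S` positive diagonal. Then `Y_• = V V_{*,1}(I,:)⁻¹ = X S⁻¹`, and
`V_{*,1}(I,:) E V_{*,1}(I,:)ᵀ = S P S` has diagonal `S²` because `P` has unit diagonal, so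
`J = S` and `Z = X = Θ̃ Π`. Each row of `Π` sums to one, so it is recovered from `Z` by
ℓ₁-normalization.
-/

open Matrix

/-- The Euclidean norm of a row vector. -/
noncomputable def rnorm {m : ℕ} (v : Fin m → ℝ) : ℝ := Real.sqrt (∑ j, v j ^ 2)

/-- Row-wise ℓ₂-normalization of a matrix. -/
noncomputable def rowNormalize {n m : ℕ} (V : Matrix (Fin n) (Fin m) ℝ) :
    Matrix (Fin n) (Fin m) ℝ :=
  Matrix.of fun i j => V i j / rnorm (V i)

theorem submatrix_diagonal_mul {l m k R : Type*} [Fintype l] [Fintype m] [DecidableEq l]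
    [DecidableEq m] [NonUnitalNonAssocSemiring R] (d : m → R) (A : Matrix m k R) (I : l → m) :
    (diagonal d * A).submatrix I id = diagonal (d ∘ I) * A.submatrix I id := by
  ext i j
  simp [diagonal_mul]

theorem submatrix_mul_id {l m k o R : Type*} [Fintype m] [Mul R] [AddCommMonoid R]
    (A : Matrix l m R) (B : Matrix m o R) (I : k → l) :
    (A * B).submatrix I id = A.submatrix I id * B := by
  rw [submatrix_mul _ _ I id id Function.bijective_id, submatrix_id_id]

theorem submatrix_mul_mul_transpose {l m k R : Type*} [Fintype l] [Fintype m] [Mul R]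
    [AddCommMonoid R] (A : Matrix m l R) (M : Matrix l l R) (I : k → m) :
    (A * M * Aᵀ).submatrix I I = A.submatrix I id * M * (A.submatrix I id)ᵀ := by
  rw [submatrix_mul _ _ I id I Function.bijective_id,
    submatrix_mul _ _ I id id Function.bijective_id, transpose_submatrix, submatrix_id_id]

theorem exists_eq_mul_of_mul_mul_transpose_eq {l m k R : Type*} [Fintype l] [Fintype m]
    [Fintype k] [DecidableEq k] [DecidableEq l] [CommRing R]
    {X : Matrix m l R} {P : Matrix l l R} {V : Matrix m k R} {E : Matrix k k R} (I : l → m)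
    (hX : IsUnit (X.submatrix I id)) (hV : Vᵀ * V = 1) (hE : IsUnit E)
    (hL : X * P * Xᵀ = V * E * Vᵀ) :
    ∃ B : Matrix l k R, V = X * B ∧ B * E * Bᵀ = P := by
  set B := P * Xᵀ * V * E⁻¹
  have hVB : V = X * B := calc
    V = V * E * E⁻¹ := (mul_nonsing_inv_cancel_right _ _ ((isUnit_iff_isUnit_det E).mp hE)).symm
    _ = V * E * Vᵀ * V * E⁻¹ := by rw [Matrix.mul_assoc (V * E), hV, Matrix.mul_one]
    _ = X * B := by rw [← hL]; simp only [B, Matrix.mul_assoc]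
  refine ⟨B, hVB, ?_⟩
  set D := X.submatrix I id
  have hVI : V.submatrix I id = D * B := by
    rw [hVB, submatrix_mul_id]
  have hcorner := congrArg (·.submatrix I I) hL
  simp only [submatrix_mul_mul_transpose, hVI, transpose_mul] at hcorner
  have hcorner' : D * P * Dᵀ = D * (B * E * Bᵀ) * Dᵀ := by
    rw [hcorner]; simp only [Matrix.mul_assoc]
  exact (hX.mul_left_cancel (((isUnit_transpose D).mpr hX).mul_right_cancel hcorner')).symm

theorem transpose_mul_inv_mul_transpose {k R : Type*} [Fintype k] [DecidableEq k] [CommRing R]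
    {C : Matrix k k R} (hC : IsUnit C.det) : Cᵀ * (C * Cᵀ)⁻¹ = C⁻¹ := by
  rw [Matrix.mul_inv_rev, ← Matrix.mul_assoc,
    mul_nonsing_inv _ (by rwa [det_transpose]), Matrix.one_mul]

theorem mul_transpose_mul_inv_mul_sqrt_diag_eq {m k : Type*} [Fintype m] [Fintype k]
    [DecidableEq k] {X : Matrix m k ℝ} {V : Matrix m k ℝ} {B C E P : Matrix k k ℝ} (s : k → ℝ)
    (hs : ∀ j, 0 < s j) (hV : V = X * B) (hC : C = diagonal s * B) (hBEB : B * E * Bᵀ = P)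
    (hP : IsUnit P) (hPdiag : ∀ j, P j j = 1) :
    V * Cᵀ * (C * Cᵀ)⁻¹ * diagonal (fun j => √((C * E * Cᵀ) j j)) = X := by
  have hBdet : IsUnit B.det := by
    have hPdet := (isUnit_iff_isUnit_det P).mp hP
    rw [← hBEB, det_mul, det_mul, det_transpose] at hPdet
    exact isUnit_of_mul_isUnit_left (isUnit_of_mul_isUnit_left hPdet)
  have hCdet : IsUnit C.det := by
    rw [hC, det_mul, det_diagonal]
    exact (Finset.prod_ne_zero_iff.mpr fun j _ => (hs j).ne').isUnit.mul hBdet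
  have hCEC : C * E * Cᵀ = diagonal s * P * diagonal s := by
    rw [hC, transpose_mul, diagonal_transpose, ← hBEB]
    simp only [Matrix.mul_assoc]
  have hJ : diagonal (fun j => √((C * E * Cᵀ) j j)) = diagonal s := by
    congr 1
    funext j
    rw [hCEC, mul_diagonal, diagonal_mul, hPdiag, mul_one, Real.sqrt_mul_self (hs j).le]
  have hBCs : B * C⁻¹ * diagonal s = 1 :=
    mul_eq_one_comm.mp (by rw [← Matrix.mul_assoc, ← hC, mul_nonsing_inv _ hCdet])
  rw [hJ, hV, Matrix.mul_assoc X, Matrix.mul_assoc X, Matrix.mul_assoc X, Matrix.mul_assoc B,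
    transpose_mul_inv_mul_transpose hCdet, hBCs, Matrix.mul_one]

theorem rnorm_pos {m : ℕ} {v : Fin m → ℝ} (h : v ≠ 0) : 0 < rnorm v := by
  obtain ⟨j, hj⟩ := Function.ne_iff.mp h
  exact Real.sqrt_pos.mpr
    (Finset.sum_pos' (fun i _ => sq_nonneg _) ⟨j, Finset.mem_univ _, sq_pos_of_ne_zero hj⟩)

theorem rnorm_smul {m : ℕ} {c : ℝ} (hc : 0 ≤ c) (v : Fin m → ℝ) :
    rnorm (c • v) = c * rnorm v := by
  simp only [rnorm, Pi.smul_apply, smul_eq_mul, mul_pow, ← Finset.mul_sum]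
  rw [Real.sqrt_mul (sq_nonneg c), Real.sqrt_sq hc]

section RowNormalize

variable {n m K : ℕ} {V : Matrix (Fin n) (Fin m) ℝ} {I : Fin K → Fin n} {t : Fin K → ℝ}
  {B : Matrix (Fin K) (Fin m) ℝ}

theorem row_eq_smul_of_submatrix_eq_diagonal_mul (hV : V.submatrix I id = diagonal t * B)
    (k : Fin K) : V (I k) = t k • B k := by
  funext j
  simpa [diagonal_mul] using congrFun (congrFun hV k) j

theorem rowNormalize_submatrix_of_eq_diagonal_mul (ht : ∀ k, 0 < t k)
    (hV : V.submatrix I id = diagonal t * B) :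
    (rowNormalize V).submatrix I id = diagonal (fun k => (rnorm (B k))⁻¹) * B := by
  ext k j
  simp only [submatrix_apply, rowNormalize, of_apply, id, diagonal_mul,
    row_eq_smul_of_submatrix_eq_diagonal_mul hV k, rnorm_smul (ht k).le, Pi.smul_apply,
    smul_eq_mul]
  field_simp [(ht k).ne']

end RowNormalize

theorem eq_div_sum_abs_of_eq_diagonal_mul {m k : Type*} [Fintype m] [Fintype k] [DecidableEq m]
    {Pim Z : Matrix m k ℝ} {d : m → ℝ} (hd : ∀ i, 0 < d i) (hnonneg : ∀ i j, 0 ≤ Pim i j)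
    (hrowsum : ∀ i, ∑ j, Pim i j = 1) (hZ : Z = diagonal d * Pim) (i : m) (j : k) :
    Pim i j = Z i j / ∑ l, |Z i l| := by
  subst hZ
  simp only [diagonal_mul]
  rw [Finset.sum_congr rfl fun l _ => abs_of_nonneg (mul_nonneg (hd i).le (hnonneg i l)),
    ← Finset.mul_sum, hrowsum, mul_one, mul_div_cancel_left₀ _ (hd i).ne']

theorem ideal_mixed_RSC_recovers_general {n K : ℕ}
    (Pim : Matrix (Fin n) (Fin K) ℝ)
    (hnonneg : ∀ i k, 0 ≤ Pim i k)
    (hrowsum : ∀ i, ∑ k, Pim i k = 1)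
    (I : Fin K → Fin n)
    (hpure : ∀ k l, Pim (I k) l = if l = k then (1 : ℝ) else 0)
    (θ : Fin n → ℝ) (hθ : ∀ i, 0 < θ i)
    (P : Matrix (Fin K) (Fin K) ℝ)
    (hPunit : IsUnit P) (hPdiag : ∀ k, P k k = 1)
    (V : Matrix (Fin n) (Fin K) ℝ) (E : Matrix (Fin K) (Fin K) ℝ)
    (hVorth : Vᵀ * V = 1) (hEunit : IsUnit E)
    (hL : Matrix.diagonal θ * Pim * P * Pimᵀ * Matrix.diagonal θ = V * E * Vᵀ)
    (hrows : ∀ i, V i ≠ 0) :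
    let Vc := (rowNormalize V).submatrix I id
    let Yb := V * Vcᵀ * (Vc * Vcᵀ)⁻¹
    let J := Matrix.diagonal (fun k => Real.sqrt ((Vc * E * Vcᵀ) k k))
    let Z := Yb * J
    (∃ d : Fin n → ℝ, (∀ i, 0 < d i) ∧ Z = Matrix.diagonal d * Pim) ∧
    ∀ i k, Pim i k = Z i k / ∑ l, |Z i l| := by
  intro Vc Yb J Z
  have hPimI : Pim.submatrix I id = 1 := by
    ext k l
    simp [hpure, one_apply, eq_comm]
  have hXI : (diagonal θ * Pim).submatrix I id = diagonal (θ ∘ I) := by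
    rw [submatrix_diagonal_mul, hPimI, Matrix.mul_one]
  have hXIunit : IsUnit (diagonal (θ ∘ I)) :=
    isUnit_diagonal.mpr (Pi.isUnit_iff.mpr fun k => (hθ (I k)).ne'.isUnit)
  obtain ⟨B, hVB, hBEB⟩ := exists_eq_mul_of_mul_mul_transpose_eq (P := P) I (hXI ▸ hXIunit)
    hVorth hEunit (by rw [← hL, transpose_mul, diagonal_transpose]; simp only [Matrix.mul_assoc])
  have hVI : V.submatrix I id = diagonal (θ ∘ I) * B := by
    rw [hVB, ← hXI, submatrix_mul_id]
  have hr : ∀ k, 0 < rnorm (B k) := fun k => rnorm_pos fun hBk => hrows (I k) <| by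
    rw [row_eq_smul_of_submatrix_eq_diagonal_mul hVI k, hBk, smul_zero]
  have hZ : Z = diagonal θ * Pim :=
    mul_transpose_mul_inv_mul_sqrt_diag_eq _ (fun k => inv_pos.mpr (hr k)) hVB
      (rowNormalize_submatrix_of_eq_diagonal_mul (fun k => hθ (I k)) hVI) hBEB hPunit hPdiag
  exact ⟨⟨θ, hθ, hZ⟩, eq_div_sum_abs_of_eq_diagonal_mul hθ hnonneg hrowsum hZ⟩

/-- **Ideal Mixed-RSC exactly recovers Π.** Under the ideal setup
(`ℒ = Θ̃ Π P Π' Θ̃ = V E V'`, `V'V = I_K`, `E` diagonal invertible, `P` symmetric invertible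
with unit diagonal, `Π` a rank-`K` membership matrix with `Π(I,:) = I_K`, `Θ̃` diagonal
positive), setting `Vc = V₊(I,:)`, `Y• = V Vc' (Vc Vc')⁻¹`, `J = √(diag(Vc E Vc'))` and
`Z = Y• J`, we have `Z = D Π` for a positive diagonal `D`, hence
`Π(i,:) = Z(i,:)/‖Z(i,:)‖₁` for every `i`. -/
theorem ideal_mixed_RSC_recovers {n K : ℕ} (hK : 1 ≤ K) (hKn : K ≤ n)
    (Pim : Matrix (Fin n) (Fin K) ℝ)
    (hnonneg : ∀ i k, 0 ≤ Pim i k)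
    (hrowsum : ∀ i, ∑ k, Pim i k = 1)
    (hrank : Pim.rank = K)
    (I : Fin K → Fin n)
    (hpure : ∀ k l, Pim (I k) l = if l = k then (1 : ℝ) else 0)
    (θ : Fin n → ℝ) (hθ : ∀ i, 0 < θ i)
    (P : Matrix (Fin K) (Fin K) ℝ)
    (hPsymm : P.IsSymm) (hPunit : IsUnit P) (hPdiag : ∀ k, P k k = 1)
    (V : Matrix (Fin n) (Fin K) ℝ) (E : Matrix (Fin K) (Fin K) ℝ)
    (hVorth : Vᵀ * V = 1) (hEdiag : E.IsDiag) (hEunit : IsUnit E)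
    (hL : Matrix.diagonal θ * Pim * P * Pimᵀ * Matrix.diagonal θ = V * E * Vᵀ)
    (hrows : ∀ i, V i ≠ 0) :
    let Vc := (rowNormalize V).submatrix I id
    let Yb := V * Vcᵀ * (Vc * Vcᵀ)⁻¹
    let J := Matrix.diagonal (fun k => Real.sqrt ((Vc * E * Vcᵀ) k k))
    let Z := Yb * J
    (∃ d : Fin n → ℝ, (∀ i, 0 < d i) ∧ Z = Matrix.diagonal d * Pim) ∧
    ∀ i k, Pim i k = Z i k / ∑ l, |Z i l| :=
  ideal_mixed_RSC_recovers_general Pim hnonneg hrowsum I hpure θ hθ P hPunit hPdiag V E hVorth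
    hEunit hL hrows
end

section
/- Suppose V = Θ̃ Π Θ̃(I,I)^{-1} V(I,:) with V'V = I_K, where Π is a membership matrix with pure-node index tuple I (Π(I,:) = I_K), Θ̃ is diagonal with strictly positive diagonal, every row of V is nonzero, and V(I,:) is invertible. Then for every i ∈ {1,…,n} there exist a real number r(i) ≥ 1 and a row vector Φ(i,:) ∈ ℝ^K with nonnegative entries summing to 1 such that V_{*,1}(i,:) = r(i) Φ(i,:) V_{*,1}(I,:). Moreover, if node i is pure with Π(i,k) = 1, then r(i) = 1 and Φ(i,:) = e_k'. -/
/-!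
In the model each row of `V` is a nonnegative combination `v = ∑ c_k u_k` of the corner rows
`u_k = V(i_k,:)`, with `c_k = θ_i Π(i,k) / θ_{i_k}`. With `S = ∑ c_k ‖u_k‖` this reads
`v / ‖v‖ = (S / ‖v‖) ∑ (c_k ‖u_k‖ / S) (u_k / ‖u_k‖)`: the weights form a probability vector,
and `S ≥ ‖v‖` by the triangle inequality. For a pure node only one `c_k` is nonzero, and the
triangle inequality is an equality.
-/

open Matrix

section NormWeights

variable {ι E : Type*} [Fintype ι] [NormedAddCommGroup E] {c : ι → ℝ} {u : ι → E}

noncomputable def normWeights (c : ι → ℝ) (u : ι → E) : ι → ℝ :=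
  fun k => c k * ‖u k‖ / ∑ l, c l * ‖u l‖

lemma normWeights_nonneg (hc : ∀ k, 0 ≤ c k) (k : ι) : 0 ≤ normWeights c u k :=
  div_nonneg (mul_nonneg (hc k) (norm_nonneg _))
    (Finset.sum_nonneg fun l _ => mul_nonneg (hc l) (norm_nonneg _))

lemma sum_normWeights (h : ∑ l, c l * ‖u l‖ ≠ 0) : ∑ k, normWeights c u k = 1 := by
  unfold normWeights
  rw [← Finset.sum_div, div_self h]

lemma normWeights_eq_ite_of_forall_ne [DecidableEq ι] {k : ι} (hk : ∀ l ≠ k, c l = 0)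
    (h : ∑ l, c l * ‖u l‖ ≠ 0) : normWeights c u = fun l => if l = k then 1 else 0 := by
  have hsum : ∑ l, c l * ‖u l‖ = c k * ‖u k‖ :=
    Fintype.sum_eq_single k fun l hl => by rw [hk l hl, zero_mul]
  funext l
  by_cases hl : l = k
  · subst hl
    rw [normWeights, if_pos rfl, ← hsum, div_self h]
  · rw [normWeights, if_neg hl, hk l hl, zero_mul, zero_div]

variable [NormedSpace ℝ E]

lemma norm_sum_smul_le_sum_mul_norm (hc : ∀ k, 0 ≤ c k) :
    ‖∑ k, c k • u k‖ ≤ ∑ k, c k * ‖u k‖ :=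
  (norm_sum_le _ _).trans_eq <| Finset.sum_congr rfl fun k _ => by
    rw [norm_smul, Real.norm_of_nonneg (hc k)]

lemma sum_mul_norm_eq_norm_sum_smul_of_forall_ne {k : ι} (hk : ∀ l ≠ k, c l = 0)
    (hc : 0 ≤ c k) : ∑ l, c l * ‖u l‖ = ‖∑ l, c l • u l‖ := by
  rw [Fintype.sum_eq_single k fun l hl => by rw [hk l hl, zero_mul],
    Fintype.sum_eq_single k fun l hl => by rw [hk l hl, zero_smul], norm_smul,
    Real.norm_of_nonneg hc]

lemma sum_smul_eq_smul_sum_normWeights_smul (h : ∑ l, c l * ‖u l‖ ≠ 0) :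
    ∑ k, c k • u k = (∑ l, c l * ‖u l‖) • ∑ k, normWeights c u k • (‖u k‖⁻¹ • u k) := by
  rw [Finset.smul_sum]
  refine Finset.sum_congr rfl fun k _ => ?_
  rcases eq_or_ne (u k) 0 with hu | hu
  · simp [hu]
  · rw [normWeights, smul_smul, smul_smul, mul_div_cancel₀ _ h, mul_assoc,
      mul_inv_cancel₀ (norm_ne_zero_iff.2 hu), mul_one]

lemma inv_norm_smul_sum_smul (h : ∑ l, c l * ‖u l‖ ≠ 0) :
    ‖∑ k, c k • u k‖⁻¹ • ∑ k, c k • u k =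
      ((∑ l, c l * ‖u l‖) / ‖∑ k, c k • u k‖) •
        ∑ k, normWeights c u k • (‖u k‖⁻¹ • u k) := by
  nth_rw 2 [sum_smul_eq_smul_sum_normWeights_smul h]
  rw [smul_smul, inv_mul_eq_div]

end NormWeights

lemma eq_zero_of_sum_eq_apply_of_nonneg {ι : Type*} [Fintype ι] [DecidableEq ι] {f : ι → ℝ}
    (hf : ∀ l, 0 ≤ f l) {k : ι} (hsum : ∑ l, f l = f k) : ∀ l ≠ k, f l = 0 := by
  have hrest : ∑ l ∈ Finset.univ.erase k, f l = 0 := by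
    have := Finset.add_sum_erase Finset.univ f (Finset.mem_univ k)
    linarith
  intro l hl
  exact (Finset.sum_eq_zero_iff_of_nonneg fun l _ => hf l).1 hrest l
    (Finset.mem_erase.2 ⟨hl, Finset.mem_univ l⟩)

lemma diagonal_mul_mul_diagonal_mul_row {m n p R : Type*} [Fintype m] [Fintype n] [DecidableEq m]
    [DecidableEq n] [CommSemiring R] (d : m → R) (P : Matrix m n R) (w : n → R)
    (B : Matrix n p R) (i : m) :
    (diagonal d * P * (diagonal w * B)) i = ∑ k, (d i * P i k * w k) • B k := by
  ext j
  simp only [mul_apply, diagonal_apply, ite_mul, zero_mul, Finset.sum_ite_eq,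
    Finset.mem_univ, if_true, Finset.sum_apply, Pi.smul_apply, smul_eq_mul]
  exact Finset.sum_congr rfl fun k _ => by ring

lemma rnorm_eq_norm_toLp {m : ℕ} (v : Fin m → ℝ) :
    rnorm v = ‖(WithLp.toLp 2 v : EuclideanSpace ℝ (Fin m))‖ := by
  simp [rnorm, EuclideanSpace.norm_eq, Real.norm_eq_abs, sq_abs]

lemma toLp_rowNormalize {n m : ℕ} (V : Matrix (Fin n) (Fin m) ℝ) (i : Fin n) :
    (WithLp.toLp 2 (rowNormalize V i) : EuclideanSpace ℝ (Fin m)) =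
      ‖(WithLp.toLp 2 (V i) : EuclideanSpace ℝ (Fin m))‖⁻¹ • WithLp.toLp 2 (V i) := by
  ext j
  simp [rowNormalize, ← rnorm_eq_norm_toLp, div_eq_inv_mul]

theorem rows_scaled_convex_combination_general {n K : ℕ}
    (Pim : Matrix (Fin n) (Fin K) ℝ)
    (hnonneg : ∀ i k, 0 ≤ Pim i k)
    (hrowsum : ∀ i, ∑ k, Pim i k = 1)
    (I : Fin K → Fin n)
    (θ : Fin n → ℝ) (hθ : ∀ i, 0 < θ i)
    (V : Matrix (Fin n) (Fin K) ℝ)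
    (hVdef : V = Matrix.diagonal θ * Pim *
      (Matrix.diagonal (fun k => (θ (I k))⁻¹) * V.submatrix I id))
    (hrows : ∀ i, V i ≠ 0) :
    ∀ i : Fin n, ∃ (r : ℝ) (φ : Fin K → ℝ),
      1 ≤ r ∧ (∀ k, 0 ≤ φ k) ∧ (∑ k, φ k = 1) ∧
      rowNormalize V i = r • Matrix.vecMul φ ((rowNormalize V).submatrix I id) ∧
      (∀ k, Pim i k = 1 → r = 1 ∧ φ = fun l => if l = k then 1 else 0) := by
  intro i
  set c : Fin K → ℝ := fun k => θ i * Pim i k * (θ (I k))⁻¹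
  set u : Fin K → EuclideanSpace ℝ (Fin K) := fun k => WithLp.toLp 2 (V (I k))
  have hc : ∀ k, 0 ≤ c k := fun k =>
    mul_nonneg (mul_nonneg (hθ i).le (hnonneg i k)) (inv_nonneg.2 (hθ (I k)).le)
  have hVi : WithLp.toLp 2 (V i) = ∑ k, c k • u k := by
    conv_lhs => rw [hVdef, diagonal_mul_mul_diagonal_mul_row]
    simp only [WithLp.toLp_sum, WithLp.toLp_smul]
    rfl
  have hv : 0 < ‖∑ k, c k • u k‖ := by
    rw [← hVi, norm_pos_iff]; simpa using hrows i
  have hS : ‖∑ k, c k • u k‖ ≤ ∑ k, c k * ‖u k‖ := norm_sum_smul_le_sum_mul_norm hc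
  have hS0 : ∑ k, c k * ‖u k‖ ≠ 0 := (hv.trans_le hS).ne'
  refine ⟨(∑ k, c k * ‖u k‖) / ‖∑ k, c k • u k‖, normWeights c u, (one_le_div hv).2 hS,
    normWeights_nonneg hc, sum_normWeights hS0, ?_, fun k hk => ?_⟩
  · apply WithLp.toLp_injective 2
    rw [toLp_rowNormalize, hVi, inv_norm_smul_sum_smul hS0, vecMul_eq_sum, WithLp.toLp_smul,
      WithLp.toLp_sum]
    simp only [WithLp.toLp_smul]
    exact congrArg _ (Finset.sum_congr rfl fun k _ => congrArg _ (toLp_rowNormalize V (I k)).symm)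
  · have hPim : ∀ l ≠ k, Pim i l = 0 :=
      eq_zero_of_sum_eq_apply_of_nonneg (hnonneg i) ((hrowsum i).trans hk.symm)
    have hck : ∀ l ≠ k, c l = 0 := fun l hl => by simp [c, hPim l hl]
    exact ⟨by rw [sum_mul_norm_eq_norm_sum_smul_of_forall_ne hck (hc k), div_self hv.ne'],
      normWeights_eq_ite_of_forall_ne hck hS0⟩

/-- **scaled convex combinations.** Under the ideal setup each row of the
row-normalized `V₊` is a scaled convex combination of the corner rows:
`V₊(i,:) = r(i) Φ(i,:) V₊(I,:)` with `r(i) ≥ 1` and `Φ(i,:)` a probability row vector;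
if `i` is pure with `Π(i,k) = 1`, then `r(i) = 1` and `Φ(i,:) = e_k'`. -/
theorem rows_scaled_convex_combination {n K : ℕ} (hK : 1 ≤ K) (hKn : K ≤ n)
    (Pim : Matrix (Fin n) (Fin K) ℝ)
    (hnonneg : ∀ i k, 0 ≤ Pim i k)
    (hrowsum : ∀ i, ∑ k, Pim i k = 1)
    (I : Fin K → Fin n)
    (hpure : ∀ k l, Pim (I k) l = if l = k then (1 : ℝ) else 0)
    (θ : Fin n → ℝ) (hθ : ∀ i, 0 < θ i)
    (V : Matrix (Fin n) (Fin K) ℝ)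
    (hVorth : Vᵀ * V = 1)
    (hVdef : V = Matrix.diagonal θ * Pim *
      (Matrix.diagonal (fun k => (θ (I k))⁻¹) * V.submatrix I id))
    (hrows : ∀ i, V i ≠ 0)
    (hVI : IsUnit (V.submatrix I id)) :
    ∀ i : Fin n, ∃ (r : ℝ) (φ : Fin K → ℝ),
      1 ≤ r ∧ (∀ k, 0 ≤ φ k) ∧ (∑ k, φ k = 1) ∧
      rowNormalize V i = r • Matrix.vecMul φ ((rowNormalize V).submatrix I id) ∧
      (∀ k, Pim i k = 1 → r = 1 ∧ φ = fun l => if l = k then 1 else 0) :=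
  rows_scaled_convex_combination_general Pim hnonneg hrowsum I θ hθ V hVdef hrows
end
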